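/- (Reduction to the dispersionless KP equation.) Let u : ℝ³ → ℝ be a smooth function of (y¹,y³,y⁴) and define a(y¹,y²,y³,y⁴) = −u_{y¹} + (y²)²/2 and b(y¹,y²,y³,y⁴) = y² u_{y¹} + u_{y³} − (y²)³/3. Then the equation a_{y⁴} − b_{y³} = a_{y¹} b_{y²} − a_{y²} b_{y¹} holds at a point (y¹,y²,y³,y⁴) if and only if u satisfies the dispersionless KP equation u_{y⁴y¹} + u_{y³y³} = u_{y¹} u_{y¹y¹} at (y¹,y³,y⁴); in particular, the terms involving y² cancel identically. -/

import Mathlib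

/-!
The first derivatives of `a` and `b` are read off by the chain rule, and the two sides of the
equation then differ by `u_{y¹} u_{y¹y¹} − u_{y¹y⁴} − u_{y³y³} + y² (u_{y¹y³} − u_{y³y¹})`, the
`(y²)²` terms cancelling outright. Symmetry of the second derivatives of `u` kills the `y²` term
and turns `u_{y¹y⁴}` into `u_{y⁴y¹}`, which leaves the dispersionless KP equation.
-/

noncomputable section

/-- Partial derivative of `f : ℝⁿ → ℝ` in the `i`-th coordinate direction. -/
def pd {n : ℕ} (i : Fin n) (f : (Fin n → ℝ) → ℝ) : (Fin n → ℝ) → ℝ :=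
  fun p => fderiv ℝ f p (Pi.single i 1)

/-- The restriction map `(y¹,y²,y³,y⁴) ↦ (y¹,y³,y⁴)`. -/
def proj134 (w : Fin 4 → ℝ) : Fin 3 → ℝ := fun j => w (![0, 2, 3] j)

section PartialDerivative

variable {n : ℕ} {f g : (Fin n → ℝ) → ℝ} {p : Fin n → ℝ}

lemma fderiv_apply_single (j : Fin n) : fderiv ℝ f p (Pi.single j 1) = pd j f p := rfl

lemma ContDiff.differentiable_pd (hf : ContDiff ℝ 2 f) (i : Fin n) :
    Differentiable ℝ (pd i f) :=
  ((hf.fderiv_right (m := 1) le_rfl).clm_apply contDiff_const).differentiable one_ne_zero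

lemma pd_pd_comm (hf : ContDiffAt ℝ 2 f p) (i j : Fin n) :
    pd i (pd j f) p = pd j (pd i f) p := by
  have hdf : DifferentiableAt ℝ (fderiv ℝ f) p :=
    (hf.fderiv_right (m := 1) le_rfl).differentiableAt one_ne_zero
  have pd_pd_eq : ∀ i j : Fin n, pd i (pd j f) p =
      fderiv ℝ (fderiv ℝ f) p (Pi.single i 1) (Pi.single j 1) := by
    intro i j
    rw [pd, show pd j f = fun q => fderiv ℝ f q (Pi.single j 1) from rfl,
      fderiv_clm_apply hdf (differentiableAt_const _)]
    simp
  rw [pd_pd_eq, pd_pd_eq]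
  exact hf.isSymmSndFDerivAt (by simp) _ _

variable {i : Fin n}

lemma pd_add (hf : DifferentiableAt ℝ f p) (hg : DifferentiableAt ℝ g p) :
    pd i (fun x => f x + g x) p = pd i f p + pd i g p := by
  simp only [pd, fderiv_fun_add hf hg, add_apply]

lemma pd_sub (hf : DifferentiableAt ℝ f p) (hg : DifferentiableAt ℝ g p) :
    pd i (fun x => f x - g x) p = pd i f p - pd i g p := by
  simp only [pd, fderiv_fun_sub hf hg, sub_apply]

lemma pd_neg : pd i (fun x => -f x) p = -pd i f p := by
  simp only [pd, fderiv_fun_neg, neg_apply]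

lemma pd_mul (hf : DifferentiableAt ℝ f p) (hg : DifferentiableAt ℝ g p) :
    pd i (fun x => f x * g x) p = pd i f p * g p + f p * pd i g p := by
  simp only [pd, fderiv_fun_mul hf hg, add_apply, smul_apply, smul_eq_mul]
  ring

lemma pd_div_const (hf : DifferentiableAt ℝ f p) (c : ℝ) :
    pd i (fun x => f x / c) p = pd i f p / c := by
  simp only [pd, div_eq_mul_inv, fderiv_mul_const hf, smul_apply, smul_eq_mul]
  ring

lemma pd_pow (hf : DifferentiableAt ℝ f p) (k : ℕ) :
    pd i (fun x => f x ^ k) p = k * f p ^ (k - 1) * pd i f p := by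
  rw [pd, show (fun x => f x ^ k) = f ^ k from rfl, fderiv_pow k hf]
  simp [pd]

lemma pd_apply (j : Fin n) : pd i (fun x => x j) p = (Pi.single i 1 : Fin n → ℝ) j := by
  rw [pd, (hasFDerivAt_apply j p).fderiv]
  rfl

end PartialDerivative

section Reduction

def proj134CLM : (Fin 4 → ℝ) →L[ℝ] (Fin 3 → ℝ) :=
  ContinuousLinearMap.pi fun j => ContinuousLinearMap.proj (![0, 2, 3] j)

lemma hasFDerivAt_proj134 (w : Fin 4 → ℝ) : HasFDerivAt proj134 proj134CLM w :=
  proj134CLM.hasFDerivAt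

@[fun_prop]
lemma differentiable_proj134 : Differentiable ℝ proj134 :=
  fun w => (hasFDerivAt_proj134 w).differentiableAt

lemma proj134_single_zero : proj134 (Pi.single 0 1) = Pi.single 0 1 := by
  funext j; fin_cases j <;> simp [proj134]

lemma proj134_single_one : proj134 (Pi.single 1 1) = 0 := by
  funext j; fin_cases j <;> simp [proj134]

lemma proj134_single_two : proj134 (Pi.single 2 1) = Pi.single 1 1 := by
  funext j; fin_cases j <;> simp [proj134]

lemma proj134_single_three : proj134 (Pi.single 3 1) = Pi.single 2 1 := by
  funext j; fin_cases j <;> simp [proj134]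

lemma pd_comp_proj134 {g : (Fin 3 → ℝ) → ℝ} {w : Fin 4 → ℝ}
    (hg : DifferentiableAt ℝ g (proj134 w)) (i : Fin 4) :
    pd i (fun w => g (proj134 w)) w = fderiv ℝ g (proj134 w) (proj134 (Pi.single i 1)) := by
  change fderiv ℝ (g ∘ proj134) w _ = _
  rw [(hg.hasFDerivAt.comp w (hasFDerivAt_proj134 w)).fderiv]
  rfl

def reducedA (u : (Fin 3 → ℝ) → ℝ) (w : Fin 4 → ℝ) : ℝ :=
  -(pd 0 u (proj134 w)) + (w 1) ^ 2 / 2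

def reducedB (u : (Fin 3 → ℝ) → ℝ) (w : Fin 4 → ℝ) : ℝ :=
  w 1 * pd 0 u (proj134 w) + pd 1 u (proj134 w) - (w 1) ^ 3 / 3

variable {u : (Fin 3 → ℝ) → ℝ}

lemma pd_reducedA (hu : Differentiable ℝ (pd 0 u)) (i : Fin 4) (w : Fin 4 → ℝ) :
    pd i (reducedA u) w =
      -fderiv ℝ (pd 0 u) (proj134 w) (proj134 (Pi.single i 1)) +
        w 1 * (Pi.single i 1 : Fin 4 → ℝ) 1 := by
  unfold reducedA
  rw [pd_add (by fun_prop) (by fun_prop), pd_neg, pd_comp_proj134 (by fun_prop),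
    pd_div_const (by fun_prop), pd_pow (by fun_prop), pd_apply]
  ring

lemma pd_reducedB (hu₀ : Differentiable ℝ (pd 0 u)) (hu₁ : Differentiable ℝ (pd 1 u))
    (i : Fin 4) (w : Fin 4 → ℝ) :
    pd i (reducedB u) w =
      (Pi.single i 1 : Fin 4 → ℝ) 1 * (pd 0 u (proj134 w) - w 1 ^ 2) +
        w 1 * fderiv ℝ (pd 0 u) (proj134 w) (proj134 (Pi.single i 1)) +
        fderiv ℝ (pd 1 u) (proj134 w) (proj134 (Pi.single i 1)) := by
  unfold reducedB
  rw [pd_sub (by fun_prop) (by fun_prop), pd_add (by fun_prop) (by fun_prop),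
    pd_mul (by fun_prop) (by fun_prop), pd_comp_proj134 (by fun_prop),
    pd_comp_proj134 (by fun_prop), pd_div_const (by fun_prop), pd_pow (by fun_prop), pd_apply]
  push_cast
  ring

end Reduction

/-- reduction to the dispersionless KP equation: with
`a = −u_{y¹} + (y²)²/2` and `b = y² u_{y¹} + u_{y³} − (y²)³/3`, the equation
`a_{y⁴} − b_{y³} = a_{y¹} b_{y²} − a_{y²} b_{y¹}` holds at a point `(y¹,y²,y³,y⁴)` iff `u`
satisfies the dispersionless KP equation `u_{y⁴y¹} + u_{y³y³} = u_{y¹} u_{y¹y¹}` at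
`(y¹,y³,y⁴)` (variables of `u` ordered `(y¹,y³,y⁴)`). -/
theorem stmt17 (u : (Fin 3 → ℝ) → ℝ) (hu : ContDiff ℝ (⊤ : ℕ∞) u) :
    ∀ w : Fin 4 → ℝ,
      (pd 3 (fun w' => -(pd 0 u (proj134 w')) + (w' 1) ^ 2 / 2) w -
          pd 2 (fun w' => w' 1 * pd 0 u (proj134 w') + pd 1 u (proj134 w') -
            (w' 1) ^ 3 / 3) w =
        pd 0 (fun w' => -(pd 0 u (proj134 w')) + (w' 1) ^ 2 / 2) w *
            pd 1 (fun w' => w' 1 * pd 0 u (proj134 w') + pd 1 u (proj134 w') -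
              (w' 1) ^ 3 / 3) w -
          pd 1 (fun w' => -(pd 0 u (proj134 w')) + (w' 1) ^ 2 / 2) w *
            pd 0 (fun w' => w' 1 * pd 0 u (proj134 w') + pd 1 u (proj134 w') -
              (w' 1) ^ 3 / 3) w) ↔
      (pd 0 (pd 2 u) (proj134 w) + pd 1 (pd 1 u) (proj134 w) =
        pd 0 u (proj134 w) * pd 0 (pd 0 u) (proj134 w)) := by
  intro w
  have hu₂ : ContDiff ℝ 2 u := hu.of_le (WithTop.coe_le_coe.mpr le_top)
  change pd 3 (reducedA u) w - pd 2 (reducedB u) w =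
      pd 0 (reducedA u) w * pd 1 (reducedB u) w - pd 1 (reducedA u) w * pd 0 (reducedB u) w ↔ _
  simp only [pd_reducedA (hu₂.differentiable_pd 0),
    pd_reducedB (hu₂.differentiable_pd 0) (hu₂.differentiable_pd 1), proj134_single_zero,
    proj134_single_one, proj134_single_two, proj134_single_three, fderiv_apply_single, map_zero,
    Pi.single_eq_same, ne_eq, Fin.reduceEq, not_false_eq_true, Pi.single_eq_of_ne]
  rw [pd_pd_comm hu₂.contDiffAt 2 0, pd_pd_comm hu₂.contDiffAt 0 1]
  constructor <;> intro h <;> linear_combination -h
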